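/- arXiv:math/0512391 — 2 statements merged into one kernel-verified Lean document; each statement's English description precedes it below -/
import Mathlib

section
/- For every p in the open interval (0, 1/4), the cubic polynomial P(X) = 2(4p-1)X^3 + (24p^2-18p+1)X^2 + p(7-12p)X + p(2p-1) has at least one root in the open interval (0,1). -/
theorem stmt_0 (p : ℝ) (hp : 0 < p) (hp' : p < 1/4) :
    ∃ x : ℝ, 0 < x ∧ x < 1 ∧
      2*(4*p-1)*x^3 + (24*p^2-18*p+1)*x^2 + p*(7-12*p)*x + p*(2*p-1) = 0 := by
  set f : ℝ → ℝ := fun x => 2*(4*p-1)*x^3 + (24*p^2-18*p+1)*x^2 + p*(7-12*p)*x + p*(2*p-1) with hf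
  have hcont : ContinuousOn f (Set.Icc (0:ℝ) (1/4)) := by
    apply Continuous.continuousOn; fun_prop
  have h0 : f 0 < 0 := by
    simp only [hf]
    nlinarith
  have h1 : 0 < f (1/4) := by
    simp only [hf]
    nlinarith [sq_nonneg (4*p-1), sq_nonneg p, mul_pos (show (0:ℝ) < 1-4*p by linarith) (show (0:ℝ) < 1-4*p by linarith)]
  have := intermediate_value_Ioo (by norm_num : (0:ℝ) ≤ 1/4) hcont
  have hmem : (0:ℝ) ∈ Set.Ioo (f 0) (f (1/4)) := ⟨h0, h1⟩
  obtain ⟨x, hx, hfx⟩ := this hmem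
  exact ⟨x, hx.1, by linarith [hx.2], hfx⟩
end

section
/- Let M(a), M(b), M(ab), M(ba) be 2×2 real matrices with strictly positive entries, all entries drawn from a fixed finite set of positive reals q(u), u ∈ Σ. Set δ = min over the four matrices of (min entry)/(max entry) and assume K is the maximum over matrices M, row pairs (i,j) of max_k M_{ik}/M_{jk} − min_k M_{ik}/M_{jk}. Then 0 < δ < 1 implies: for any sequence x_1, x_2, … of symbols and any k ∈ {1,2}, the ratios M(x_1)⋯M(x_n)_{2k} / M(x_1)⋯M(x_n)_{1k} converge as n → ∞ to a limit c independent of k, with |M(x_1)⋯M(x_n)_{2k}/M(x_1)⋯M(x_n)_{1k} − c| ≤ K(1−δ^2)^{n−1}. -/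
/-!
Write `r_n(k) = P_n(1,k) / P_n(0,k)` for the prefix products `P_n`. Since `P_{n+1} = P_n N`,
each `r_{n+1}(k)` is a mediant of `r_n(0)` and `r_n(1)`, so the intervals `[[r_n(0), r_n(1)]]`
are nested, and the limit `c` is their common point. Their lengths are
`|det P_n| / (P_n(0,0) P_n(0,1))`, and multiplying by `N` shrinks this quantity at least by the
factor `|det N| / (N₀₀N₁₁ + N₀₁N₁₀)`, which is at most `1 - δ²` when `δ ≤ min N / max N`
(Birkhoff contraction in dimension two).
-/

open Filter Topology Set Matrix

noncomputable def rowRatio (P : Matrix (Fin 2) (Fin 2) ℝ) (k : Fin 2) : ℝ :=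
  P 1 k / P 0 k

theorem mediant_mem_uIcc {a b c d e f : ℝ} (hc : 0 < c) (hd : 0 < d) (he : 0 < e) (hf : 0 < f) :
    (a * e + b * f) / (c * e + d * f) ∈ uIcc (a / c) (b / d) := by
  have hD : 0 < c * e + d * f := by positivity
  rw [mem_uIcc]
  rcases le_total (a / c) (b / d) with h | h
  · rw [div_le_div_iff₀ hc hd] at h
    left
    constructor
    · rw [div_le_div_iff₀ hc hD]; nlinarith
    · rw [div_le_div_iff₀ hD hd]; nlinarith
  · rw [div_le_div_iff₀ hd hc] at h
    right
    constructor
    · rw [div_le_div_iff₀ hd hD]; nlinarith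
    · rw [div_le_div_iff₀ hD hc]; nlinarith

theorem rowRatio_mul_mem_uIcc {P N : Matrix (Fin 2) (Fin 2) ℝ} (hP : ∀ j, 0 < P 0 j)
    (hN : ∀ i j, 0 < N i j) (k : Fin 2) :
    rowRatio (P * N) k ∈ uIcc (rowRatio P 0) (rowRatio P 1) := by
  simp only [rowRatio, mul_apply, Fin.sum_univ_two]
  exact mediant_mem_uIcc (hP 0) (hP 1) (hN 0 k) (hN 1 k)

theorem rowRatio_zero_sub_rowRatio_one {P : Matrix (Fin 2) (Fin 2) ℝ} (h0 : P 0 0 ≠ 0)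
    (h1 : P 0 1 ≠ 0) : rowRatio P 0 - rowRatio P 1 = -P.det / (P 0 0 * P 0 1) := by
  rw [rowRatio, rowRatio, det_fin_two]
  field_simp
  ring

theorem abs_det_le_of_mul_le {N : Matrix (Fin 2) (Fin 2) ℝ} {δ : ℝ} (hN : ∀ i j, 0 < N i j)
    (hδ : 0 ≤ δ) (hδN : ∀ i j i' j', δ * N i' j' ≤ N i j) :
    |N.det| ≤ (1 - δ ^ 2) * (N 0 0 * N 1 1 + N 0 1 * N 1 0) := by
  have hδ1 : δ ≤ 1 := (mul_le_iff_le_one_left (hN 0 0)).1 (hδN 0 0 0 0)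
  have hp : δ ^ 2 * (N 0 0 * N 1 1) ≤ N 0 1 * N 1 0 := by
    have := mul_le_mul (hδN 0 1 0 0) (hδN 1 0 1 1) (mul_nonneg hδ (hN 1 1).le) (hN 0 1).le
    linarith
  have hq : δ ^ 2 * (N 0 1 * N 1 0) ≤ N 0 0 * N 1 1 := by
    have := mul_le_mul (hδN 0 0 0 1) (hδN 1 1 1 0) (mul_nonneg hδ (hN 1 0).le) (hN 0 0).le
    linarith
  have hδ2 : δ ^ 2 ≤ 1 := pow_le_one₀ hδ hδ1
  have hp0 : 0 < N 0 0 * N 1 1 := mul_pos (hN 0 0) (hN 1 1)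
  have hq0 : 0 < N 0 1 * N 1 0 := mul_pos (hN 0 1) (hN 1 0)
  rw [det_fin_two, abs_le]
  constructor <;> nlinarith

theorem abs_rowRatio_mul_sub_le {P N : Matrix (Fin 2) (Fin 2) ℝ} {δ : ℝ}
    (hP : ∀ j, 0 < P 0 j) (hN : ∀ i j, 0 < N i j) (hδ : 0 ≤ δ)
    (hδN : ∀ i j i' j', δ * N i' j' ≤ N i j) :
    |rowRatio (P * N) 0 - rowRatio (P * N) 1| ≤ (1 - δ ^ 2) * |rowRatio P 0 - rowRatio P 1| := by
  have hPN : ∀ j, 0 < (P * N) 0 j := fun j => by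
    simp only [mul_apply, Fin.sum_univ_two]
    exact add_pos (mul_pos (hP 0) (hN 0 j)) (mul_pos (hP 1) (hN 1 j))
  set S := N 0 0 * N 1 1 + N 0 1 * N 1 0
  have hS : 0 < S := add_pos (mul_pos (hN 0 0) (hN 1 1)) (mul_pos (hN 0 1) (hN 1 0))
  have hden : P 0 0 * P 0 1 * S ≤ (P * N) 0 0 * (P * N) 0 1 := by
    simp only [S, mul_apply, Fin.sum_univ_two]
    nlinarith [mul_pos (mul_pos (hP 0) (hP 0)) (mul_pos (hN 0 0) (hN 0 1)),
      mul_pos (mul_pos (hP 1) (hP 1)) (mul_pos (hN 1 0) (hN 1 1))]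
  rw [rowRatio_zero_sub_rowRatio_one (hPN 0).ne' (hPN 1).ne',
    rowRatio_zero_sub_rowRatio_one (hP 0).ne' (hP 1).ne', det_mul, abs_div, abs_div, abs_neg,
    abs_neg, abs_mul, abs_of_pos (mul_pos (hPN 0) (hPN 1)), abs_of_pos (mul_pos (hP 0) (hP 1))]
  have hdet := abs_det_le_of_mul_le hN hδ hδN
  calc |P.det| * |N.det| / ((P * N) 0 0 * (P * N) 0 1)
      ≤ |P.det| * ((1 - δ ^ 2) * S) / (P 0 0 * P 0 1 * S) :=
        div_le_div₀ (mul_nonneg (abs_nonneg _) ((abs_nonneg _).trans hdet))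
          (mul_le_mul_of_nonneg_left hdet (abs_nonneg _)) (mul_pos (mul_pos (hP 0) (hP 1)) hS) hden
    _ = (1 - δ ^ 2) * (|P.det| / (P 0 0 * P 0 1)) := by
        field_simp [(hP 0).ne', (hP 1).ne', hS.ne']

theorem exists_forall_mem_uIcc_of_antitone {a b : ℕ → ℝ}
    (h : Antitone fun n => uIcc (a n) (b n)) : ∃ c, ∀ n, c ∈ uIcc (a n) (b n) :=
  ⟨_, mem_iInter.1 (ciSup_mem_iInter_Icc_of_antitone_Icc (f := fun n => a n ⊓ b n)
    (g := fun n => a n ⊔ b n) h fun _ => inf_le_sup)⟩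

section PrefixProd

/-- `prefixProd N n = N 0 * N 1 * ⋯ * N (n - 1)`. -/
def prefixProd (N : ℕ → Matrix (Fin 2) (Fin 2) ℝ) (n : ℕ) : Matrix (Fin 2) (Fin 2) ℝ :=
  ((List.range n).map N).prod

variable {N : ℕ → Matrix (Fin 2) (Fin 2) ℝ}

theorem prefixProd_succ (n : ℕ) : prefixProd N (n + 1) = prefixProd N n * N n := by
  simp [prefixProd, List.range_succ]

theorem prefixProd_one : prefixProd N 1 = N 0 := by
  simp [prefixProd]

theorem prefixProd_succ_pos (hN : ∀ n i j, 0 < N n i j) (n : ℕ) (i j : Fin 2) :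
    0 < prefixProd N (n + 1) i j := by
  induction n generalizing i j with
  | zero => rw [prefixProd_one]; exact hN 0 i j
  | succ n ih =>
    rw [prefixProd_succ, mul_apply, Fin.sum_univ_two]
    exact add_pos (mul_pos (ih i 0) (hN _ 0 j)) (mul_pos (ih i 1) (hN _ 1 j))

theorem antitone_uIcc_rowRatio_prefixProd (hN : ∀ n i j, 0 < N n i j) :
    Antitone fun n =>
      uIcc (rowRatio (prefixProd N (n + 1)) 0) (rowRatio (prefixProd N (n + 1)) 1) :=
  antitone_nat_of_succ_le fun n => by
    rw [prefixProd_succ (n + 1)]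
    exact uIcc_subset_uIcc
      (rowRatio_mul_mem_uIcc (prefixProd_succ_pos hN n 0) (hN _) 0)
      (rowRatio_mul_mem_uIcc (prefixProd_succ_pos hN n 0) (hN _) 1)

theorem abs_rowRatio_prefixProd_sub_le {δ K : ℝ} (hN : ∀ n i j, 0 < N n i j) (hδ : 0 ≤ δ)
    (hδN : ∀ n i j i' j', δ * N n i' j' ≤ N n i j)
    (hK : |rowRatio (N 0) 0 - rowRatio (N 0) 1| ≤ K) (n : ℕ) :
    |rowRatio (prefixProd N (n + 1)) 0 - rowRatio (prefixProd N (n + 1)) 1| ≤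
      K * (1 - δ ^ 2) ^ n := by
  have hδ1 : δ ≤ 1 := (mul_le_iff_le_one_left (hN 0 0 0)).1 (hδN 0 0 0 0 0)
  induction n with
  | zero => simpa [prefixProd_one] using hK
  | succ n ih =>
    rw [prefixProd_succ (n + 1)]
    calc _ ≤ (1 - δ ^ 2) *
            |rowRatio (prefixProd N (n + 1)) 0 - rowRatio (prefixProd N (n + 1)) 1| :=
          abs_rowRatio_mul_sub_le (prefixProd_succ_pos hN n 0) (hN _) hδ (hδN _)
      _ ≤ (1 - δ ^ 2) * (K * (1 - δ ^ 2) ^ n) :=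
          mul_le_mul_of_nonneg_left ih (sub_nonneg.2 (pow_le_one₀ hδ hδ1))
      _ = K * (1 - δ ^ 2) ^ (n + 1) := by ring

theorem exists_tendsto_rowRatio_prefixProd {δ K : ℝ} (hN : ∀ n i j, 0 < N n i j) (hδ : 0 < δ)
    (hδN : ∀ n i j i' j', δ * N n i' j' ≤ N n i j)
    (hK : |rowRatio (N 0) 0 - rowRatio (N 0) 1| ≤ K) :
    ∃ c, ∀ k, Tendsto (fun n => rowRatio (prefixProd N (n + 1)) k) atTop (𝓝 c) ∧
      ∀ n, |rowRatio (prefixProd N (n + 1)) k - c| ≤ K * (1 - δ ^ 2) ^ n := by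
  obtain ⟨c, hc⟩ := exists_forall_mem_uIcc_of_antitone (antitone_uIcc_rowRatio_prefixProd hN)
  have hbound : ∀ n k, |rowRatio (prefixProd N (n + 1)) k - c| ≤ K * (1 - δ ^ 2) ^ n := by
    intro n k
    have hk : rowRatio (prefixProd N (n + 1)) k ∈
        uIcc (rowRatio (prefixProd N (n + 1)) 0) (rowRatio (prefixProd N (n + 1)) 1) := by
      fin_cases k
      exacts [left_mem_uIcc, right_mem_uIcc]
    calc |rowRatio (prefixProd N (n + 1)) k - c|
        ≤ |rowRatio (prefixProd N (n + 1)) 1 - rowRatio (prefixProd N (n + 1)) 0| :=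
          abs_sub_le_of_uIcc_subset_uIcc (uIcc_subset_uIcc (hc n) hk)
      _ ≤ K * (1 - δ ^ 2) ^ n := by
          rw [abs_sub_comm]; exact abs_rowRatio_prefixProd_sub_le hN hδ.le hδN hK n
  have hδ1 : δ ≤ 1 := (mul_le_iff_le_one_left (hN 0 0 0)).1 (hδN 0 0 0 0 0)
  have hgeom : Tendsto (fun n => K * (1 - δ ^ 2) ^ n) atTop (𝓝 0) := by
    simpa using (tendsto_pow_atTop_nhds_zero_of_lt_one (by nlinarith) (by nlinarith)).const_mul K
  refine ⟨c, fun k => ⟨?_, fun n => hbound n k⟩⟩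
  rw [tendsto_iff_norm_sub_tendsto_zero]
  exact squeeze_zero_norm (fun n => (norm_norm _).le.trans (hbound n k)) hgeom

end PrefixProd

theorem mul_le_of_le_iInf_div_iSup {ι κ : Type*} [Finite ι] [Finite κ] {f : ι → κ → ℝ}
    (hf : ∀ i j, 0 < f i j) {δ : ℝ} (hδ0 : 0 ≤ δ)
    (hδ : δ ≤ (⨅ i, ⨅ j, f i j) / ⨆ i, ⨆ j, f i j) (i j i' j') :
    δ * f i' j' ≤ f i j := by
  have hle : f i' j' ≤ ⨆ i, ⨆ j, f i j :=
    le_ciSup_of_le (Finite.bddAbove_range _) i' (le_ciSup (Finite.bddAbove_range _) j')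
  have hge : (⨅ i, ⨅ j, f i j) ≤ f i j :=
    ciInf_le_of_le (Finite.bddBelow_range _) i (ciInf_le (Finite.bddBelow_range _) j)
  calc δ * f i' j' ≤ δ * ⨆ i, ⨆ j, f i j := mul_le_mul_of_nonneg_left hle hδ0
    _ ≤ ⨅ i, ⨅ j, f i j := (le_div_iff₀ ((hf i' j').trans_le hle)).1 hδ
    _ ≤ f i j := hge

theorem abs_sub_le_iSup_sub_iInf {ι : Type*} [Finite ι] (f : ι → ℝ) (i j : ι) :
    |f i - f j| ≤ (⨆ k, f k) - ⨅ k, f k := by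
  have := le_ciSup (Finite.bddAbove_range f) i
  have := le_ciSup (Finite.bddAbove_range f) j
  have := ciInf_le (Finite.bddBelow_range f) i
  have := ciInf_le (Finite.bddBelow_range f) j
  rw [abs_sub_le_iff]
  constructor <;> linarith

theorem stmt_13_general {A : Type*} [Fintype A]
    (M : A → Matrix (Fin 2) (Fin 2) ℝ)
    (hpos : ∀ u i j, 0 < M u i j)
    (δ K : ℝ)
    (hδ : δ = ⨅ u : A, (⨅ i, ⨅ j, M u i j) / (⨆ i, ⨆ j, M u i j))
    (hK : K = ⨆ u : A, ⨆ i, ⨆ j,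
      ((⨆ k, M u i k / M u j k) - ⨅ k, M u i k / M u j k))
    (hδ0 : 0 < δ)
    (x : ℕ → A) :
    ∃ c : ℝ, ∀ k : Fin 2,
      Tendsto (fun n : ℕ =>
          (((List.range n).map (fun i => M (x i))).prod 1 k) /
          (((List.range n).map (fun i => M (x i))).prod 0 k))
        atTop (𝓝 c) ∧
      ∀ n : ℕ, 1 ≤ n →
        |(((List.range n).map (fun i => M (x i))).prod 1 k) /
          (((List.range n).map (fun i => M (x i))).prod 0 k) - c|
          ≤ K * (1 - δ^2)^(n-1) := by
  have hδM (u : A) : ∀ i j i' j', δ * M u i' j' ≤ M u i j :=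
    mul_le_of_le_iInf_div_iSup (hpos u) hδ0.le (hδ ▸ ciInf_le (Finite.bddBelow_range _) u)
  have hKM (u : A) : |rowRatio (M u) 0 - rowRatio (M u) 1| ≤ K :=
    (abs_sub_le_iSup_sub_iInf (fun k => M u 1 k / M u 0 k) 0 1).trans <| hK ▸
      le_ciSup_of_le (Finite.bddAbove_range _) u <|
        le_ciSup_of_le (Finite.bddAbove_range _) 1 <|
          le_ciSup_of_le (Finite.bddAbove_range _) 0 le_rfl
  obtain ⟨c, hc⟩ := exists_tendsto_rowRatio_prefixProd (N := fun n => M (x n))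
    (fun n => hpos (x n)) hδ0 (fun n => hδM (x n)) (hKM (x 0))
  refine ⟨c, fun k => ⟨(tendsto_add_atTop_iff_nat 1).1 (hc k).1, fun n hn => ?_⟩⟩
  obtain ⟨n, rfl⟩ := Nat.exists_eq_add_of_le' hn
  exact (hc k).2 n

theorem stmt_13 {A : Type*} [Fintype A] [Nonempty A]
    (M : A → Matrix (Fin 2) (Fin 2) ℝ)
    (hpos : ∀ u i j, 0 < M u i j)
    (δ K : ℝ)
    (hδ : δ = ⨅ u : A, (⨅ i, ⨅ j, M u i j) / (⨆ i, ⨆ j, M u i j))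
    (hK : K = ⨆ u : A, ⨆ i, ⨆ j,
      ((⨆ k, M u i k / M u j k) - ⨅ k, M u i k / M u j k))
    (hδ0 : 0 < δ) (hδ1 : δ < 1)
    (x : ℕ → A) :
    ∃ c : ℝ, ∀ k : Fin 2,
      Tendsto (fun n : ℕ =>
          (((List.range n).map (fun i => M (x i))).prod 1 k) /
          (((List.range n).map (fun i => M (x i))).prod 0 k))
        atTop (𝓝 c) ∧
      ∀ n : ℕ, 1 ≤ n →
        |(((List.range n).map (fun i => M (x i))).prod 1 k) /
          (((List.range n).map (fun i => M (x i))).prod 0 k) - c|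
          ≤ K * (1 - δ^2)^(n-1) :=
  stmt_13_general M hpos δ K hδ hK hδ0 x
end
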